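/- arXiv:math/0507188 — 2 statements merged into one kernel-verified Lean document; each statement's English description precedes it below -/
import Mathlib

section
/- There exists a constant C > 0 such that ∫_{−1}^{1} ∫_{−1}^{1} ( ∫_{−1}^{1} |log|x−u|| / ( (√(1−y²) + √(1−u²))·√(1−u²) ) du )² dy dx ≤ C. In particular, the kernel N₂(x,y) = ∫_{−1}^{1} K̃(x,u)·(y+u) / ( (√(1−y²)+√(1−u²))·√(1−u²) ) du is square-integrable on [−1,1]² whenever |K̃(x,u)| ≤ |log|x−u|| + 1 pointwise. -/
/-!
Write `a = √(1 - y²)` and `b = √(1 - u²)`. Since `√(√a √b) ≤ a + b`, the weight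
`1 / ((a + b) b)` is at most `(1 - y²)^(-1/4) (1 - u²)^(-3/4)`: the `y`-singularity splits off.
On `(0, 2]` we have `|log t| + 1 ≤ 9 t^(-1/8)`, and `s^(-α) t^(-β) ≤ s^(-(α+β)) + t^(-(α+β))`,
so the `u`-integrand is dominated by `(1 - y²)^(-1/4) (|x - u|^(-7/8) + (1 - u²)^(-7/8))`, whose
`u`-integral is bounded uniformly in `x`. After squaring, only `(1 - y²)^(-1/2)` is left, which is
integrable on `[-1, 1]`.
-/

open MeasureTheory Real Set

lemma intervalIntegrable_abs_rpow {r : ℝ} (hr : -1 < r) (a b : ℝ) :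
    IntervalIntegrable (fun t : ℝ => |t| ^ r) volume a b := by
  have to_nonneg : ∀ c, 0 ≤ c → IntervalIntegrable (fun t : ℝ => |t| ^ r) volume 0 c := by
    intro c hc
    refine (intervalIntegral.intervalIntegrable_rpow' hr).congr fun t ht => ?_
    rw [uIoc_of_le hc] at ht
    simp [abs_of_pos ht.1]
  have to_any : ∀ c, IntervalIntegrable (fun t : ℝ => |t| ^ r) volume 0 c := by
    intro c
    rcases le_total 0 c with hc | hc
    · exact to_nonneg c hc
    · simpa using (to_nonneg (-c) (by linarith)).comp_sub_left 0
  exact (to_any a).symm.trans (to_any b)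

lemma integrableOn_abs_sub_rpow {r : ℝ} (hr : -1 < r) (x a b : ℝ) :
    IntegrableOn (fun u : ℝ => |x - u| ^ r) (Icc a b) := by
  have h := (intervalIntegrable_abs_rpow hr (x - a) (x - b)).comp_sub_left x
  simp only [sub_sub_cancel] at h
  exact ((intervalIntegrable_iff').1 h).mono_set Icc_subset_uIcc

lemma setIntegral_abs_sub_rpow_le {r x a b : ℝ} (hr : -1 < r) (hx : x ∈ Icc a b) :
    ∫ u in Icc a b, |x - u| ^ r ≤ ∫ t in (a - b)..(b - a), |t| ^ r := by
  rw [integral_Icc_eq_integral_Ioc, ← intervalIntegral.integral_of_le (hx.1.trans hx.2),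
    intervalIntegral.integral_comp_sub_left (fun t => |t| ^ r) x]
  obtain ⟨hax, hxb⟩ := hx
  exact intervalIntegral.integral_mono_interval (by linarith) (by linarith) (by linarith)
    (ae_of_all _ fun t => by positivity) (intervalIntegrable_abs_rpow hr _ _)

lemma rpow_neg_mul_rpow_neg_le {s t α β : ℝ} (hs : 0 < s) (ht : 0 < t) (hα : 0 ≤ α)
    (hβ : 0 ≤ β) : s ^ (-α) * t ^ (-β) ≤ s ^ (-(α + β)) + t ^ (-(α + β)) := by
  rcases le_total s t with h | h
  · calc s ^ (-α) * t ^ (-β) ≤ s ^ (-α) * s ^ (-β) :=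
          mul_le_mul_of_nonneg_left (rpow_le_rpow_of_nonpos hs h (neg_nonpos.2 hβ)) (by positivity)
      _ = s ^ (-(α + β)) := by rw [← rpow_add hs, neg_add]
      _ ≤ _ := le_add_of_nonneg_right (by positivity)
  · calc s ^ (-α) * t ^ (-β) ≤ t ^ (-α) * t ^ (-β) :=
          mul_le_mul_of_nonneg_right (rpow_le_rpow_of_nonpos ht h (neg_nonpos.2 hα)) (by positivity)
      _ = t ^ (-(α + β)) := by rw [← rpow_add ht, neg_add]
      _ ≤ _ := le_add_of_nonneg_left (by positivity)

lemma one_sub_sq_rpow_neg_le {u γ : ℝ} (hu : u ∈ Ioo (-1) 1) (hγ : 0 ≤ γ) :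
    (1 - u ^ 2) ^ (-γ) ≤ |1 - u| ^ (-γ) + |-1 - u| ^ (-γ) := by
  obtain ⟨hu1, hu2⟩ := hu
  rcases le_total 0 u with h | h
  · have : |1 - u| ≤ 1 - u ^ 2 := by rw [abs_of_pos (by linarith)]; nlinarith
    calc (1 - u ^ 2) ^ (-γ) ≤ |1 - u| ^ (-γ) :=
          rpow_le_rpow_of_nonpos (abs_pos.2 (by linarith)) this (by linarith)
      _ ≤ _ := le_add_of_nonneg_right (by positivity)
  · have : |-1 - u| ≤ 1 - u ^ 2 := by rw [abs_of_neg (by linarith)]; nlinarith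
    calc (1 - u ^ 2) ^ (-γ) ≤ |-1 - u| ^ (-γ) :=
          rpow_le_rpow_of_nonpos (abs_pos.2 (by linarith)) this (by linarith)
      _ ≤ _ := le_add_of_nonneg_left (by positivity)

lemma integrableOn_one_sub_sq_rpow_neg {γ : ℝ} (hγ₀ : 0 ≤ γ) (hγ₁ : γ < 1) :
    IntegrableOn (fun u : ℝ => (1 - u ^ 2) ^ (-γ)) (Icc (-1) 1) := by
  have hr : -1 < -γ := by linarith
  refine Integrable.mono' ((integrableOn_abs_sub_rpow hr 1 (-1) 1).add
    (integrableOn_abs_sub_rpow hr (-1) (-1) 1))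
    (by fun_prop : Measurable fun u : ℝ => (1 - u ^ 2) ^ (-γ)).aestronglyMeasurable ?_
  rw [Measure.restrict_congr_set Ioo_ae_eq_Icc.symm]
  filter_upwards [ae_restrict_mem measurableSet_Ioo] with u hu
  rw [norm_of_nonneg (rpow_nonneg (by nlinarith [hu.1, hu.2]) _)]
  exact one_sub_sq_rpow_neg_le hu hγ₀

lemma abs_log_add_one_le_rpow {t : ℝ} (h0 : 0 < t) (h2 : t ≤ 2) :
    |log t| + 1 ≤ 9 * t ^ (-(1 / 8) : ℝ) := by
  rcases le_total t 1 with h1 | h1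
  · have hlog : -log t ≤ 8 * t ^ (-(1 / 8) : ℝ) := by
      have := log_le_rpow_div (inv_nonneg.2 h0.le) (by norm_num : (0 : ℝ) < 1 / 8)
      rw [log_inv, inv_rpow h0.le, ← rpow_neg h0.le] at this
      linarith
    have hone : 1 ≤ t ^ (-(1 / 8) : ℝ) :=
      one_le_rpow_of_pos_of_le_one_of_nonpos h0 h1 (by norm_num)
    rw [abs_of_nonpos (log_nonpos h0.le h1)]
    linarith
  · have hlog : log t ≤ 1 := by linarith [log_le_sub_one_of_pos h0]
    have hhalf : 1 / 2 ≤ t ^ (-(1 / 8) : ℝ) := by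
      rw [rpow_neg h0.le, one_div]
      gcongr
      calc t ^ (1 / 8 : ℝ) ≤ t ^ (1 : ℝ) := rpow_le_rpow_of_exponent_le h1 (by norm_num)
        _ ≤ 2 := by rwa [rpow_one]
    rw [abs_of_nonneg (log_nonneg h1)]
    linarith

lemma inv_sqrt_add_sqrt_mul_sqrt_le {p q : ℝ} (hp : 0 < p) (hq : 0 < q) :
    ((√p + √q) * √q)⁻¹ ≤ p ^ (-(1 / 4) : ℝ) * q ^ (-(3 / 4) : ℝ) := by
  have quarter : ∀ {s : ℝ}, 0 ≤ s → s ^ (1 / 4 : ℝ) = √s ^ (1 / 2 : ℝ) := fun hs => by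
    rw [sqrt_eq_rpow, ← rpow_mul hs]; norm_num
  have amgm : p ^ (1 / 4 : ℝ) * q ^ (1 / 4 : ℝ) ≤ √p + √q := by
    rw [quarter hp.le, quarter hq.le]
    have := geom_mean_le_arith_mean2_weighted (w₁ := 1 / 2) (w₂ := 1 / 2) (by norm_num)
      (by norm_num) (sqrt_nonneg p) (sqrt_nonneg q) (by norm_num)
    linarith [sqrt_nonneg p, sqrt_nonneg q]
  have split : q ^ (3 / 4 : ℝ) = q ^ (1 / 4 : ℝ) * √q := by
    rw [sqrt_eq_rpow, ← rpow_add hq]; norm_num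
  rw [rpow_neg hp.le, rpow_neg hq.le, ← mul_inv]
  refine inv_anti₀ (by positivity) ?_
  calc p ^ (1 / 4 : ℝ) * q ^ (3 / 4 : ℝ) = p ^ (1 / 4 : ℝ) * q ^ (1 / 4 : ℝ) * √q := by
        rw [split]; ring
    _ ≤ (√p + √q) * √q := by gcongr

lemma ae_restrict_Icc_mem_Ioo (a b : ℝ) : ∀ᵐ u ∂volume.restrict (Icc a b), u ∈ Ioo a b := by
  rw [Measure.restrict_congr_set Ioo_ae_eq_Icc.symm]
  exact ae_restrict_mem measurableSet_Ioo

noncomputable def possioMajorant (x y u : ℝ) : ℝ :=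
  (|log (|x - u|)| + 1) / ((√(1 - y ^ 2) + √(1 - u ^ 2)) * √(1 - u ^ 2))

lemma possioMajorant_le {x y u : ℝ} (hx : x ∈ Icc (-1) 1) (hy : y ∈ Ioo (-1) 1)
    (hu : u ∈ Ioo (-1) 1) (hux : u ≠ x) :
    possioMajorant x y u ≤ 9 * (1 - y ^ 2) ^ (-(1 / 4) : ℝ) *
      (|x - u| ^ (-(7 / 8) : ℝ) + (1 - u ^ 2) ^ (-(7 / 8) : ℝ)) := by
  obtain ⟨hx₁, hx₂⟩ := hx
  obtain ⟨hy₁, hy₂⟩ := hy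
  obtain ⟨hu₁, hu₂⟩ := hu
  have ht₀ : 0 < |x - u| := abs_pos.2 (sub_ne_zero.2 hux.symm)
  have ht₂ : |x - u| ≤ 2 := abs_le.2 ⟨by linarith, by linarith⟩
  have hp : 0 < 1 - y ^ 2 := by nlinarith
  have hq : 0 < 1 - u ^ 2 := by nlinarith
  calc possioMajorant x y u
      = (|log (|x - u|)| + 1) * ((√(1 - y ^ 2) + √(1 - u ^ 2)) * √(1 - u ^ 2))⁻¹ :=
        div_eq_mul_inv _ _
    _ ≤ 9 * |x - u| ^ (-(1 / 8) : ℝ) *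
          ((1 - y ^ 2) ^ (-(1 / 4) : ℝ) * (1 - u ^ 2) ^ (-(3 / 4) : ℝ)) :=
        mul_le_mul (abs_log_add_one_le_rpow ht₀ ht₂) (inv_sqrt_add_sqrt_mul_sqrt_le hp hq)
          (by positivity) (by positivity)
    _ = 9 * (1 - y ^ 2) ^ (-(1 / 4) : ℝ) *
          (|x - u| ^ (-(1 / 8) : ℝ) * (1 - u ^ 2) ^ (-(3 / 4) : ℝ)) := by ring
    _ ≤ 9 * (1 - y ^ 2) ^ (-(1 / 4) : ℝ) *
          (|x - u| ^ (-(1 / 8 + 3 / 4) : ℝ) + (1 - u ^ 2) ^ (-(1 / 8 + 3 / 4) : ℝ)) := by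
        gcongr
        exact rpow_neg_mul_rpow_neg_le ht₀ hq (by norm_num) (by norm_num)
    _ = _ := by norm_num

noncomputable def possioInnerBound : ℝ :=
  9 * ((∫ t in (-2 : ℝ)..2, |t| ^ (-(7 / 8) : ℝ)) +
    ∫ u in Icc (-1 : ℝ) 1, (1 - u ^ 2) ^ (-(7 / 8) : ℝ))

section Domination

variable {E : Type*} [NormedAddCommGroup E] [NormedSpace ℝ E]

def PossioDominated (c : ℝ) (F : ℝ → ℝ → ℝ → E) : Prop :=
  ∀ x ∈ Icc (-1 : ℝ) 1, ∀ y ∈ Ioo (-1 : ℝ) 1, ∀ u ∈ Ioo (-1 : ℝ) 1, u ≠ x →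
    ‖F x y u‖ ≤ c * possioMajorant x y u

variable {c : ℝ}

lemma norm_integral_le_of_le_possioMajorant {F : ℝ → E} {x y : ℝ} (hc : 0 ≤ c)
    (hx : x ∈ Icc (-1) 1) (hy : y ∈ Ioo (-1) 1)
    (hF : ∀ u ∈ Ioo (-1 : ℝ) 1, u ≠ x → ‖F u‖ ≤ c * possioMajorant x y u) :
    ‖∫ u in Icc (-1) 1, F u‖ ≤ c * possioInnerBound * (1 - y ^ 2) ^ (-(1 / 4) : ℝ) := by
  have hp : 0 ≤ 1 - y ^ 2 := by nlinarith [hy.1, hy.2]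
  have hsing := integrableOn_abs_sub_rpow (r := -(7 / 8)) (by norm_num) x (-1) 1
  have hend := integrableOn_one_sub_sq_rpow_neg (γ := 7 / 8) (by norm_num) (by norm_num)
  calc ‖∫ u in Icc (-1) 1, F u‖
      ≤ ∫ u in Icc (-1) 1, c * 9 * (1 - y ^ 2) ^ (-(1 / 4) : ℝ) *
          (|x - u| ^ (-(7 / 8) : ℝ) + (1 - u ^ 2) ^ (-(7 / 8) : ℝ)) := by
        refine norm_integral_le_of_norm_le ((hsing.add hend).const_mul _) ?_
        filter_upwards [ae_restrict_Icc_mem_Ioo (-1) 1,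
          ae_restrict_of_ae ((countable_singleton x).ae_notMem volume)] with u hu hux
        calc ‖F u‖ ≤ c * possioMajorant x y u := hF u hu hux
          _ ≤ _ := by
            rw [mul_assoc c 9, mul_assoc c]
            exact mul_le_mul_of_nonneg_left (possioMajorant_le hx hy hu hux) hc
    _ = c * 9 * (1 - y ^ 2) ^ (-(1 / 4) : ℝ) *
          ((∫ u in Icc (-1) 1, |x - u| ^ (-(7 / 8) : ℝ)) +
            ∫ u in Icc (-1) 1, (1 - u ^ 2) ^ (-(7 / 8) : ℝ)) := by
        rw [integral_const_mul, integral_add hsing hend]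
    _ ≤ c * 9 * (1 - y ^ 2) ^ (-(1 / 4) : ℝ) *
          ((∫ t in (-2 : ℝ)..2, |t| ^ (-(7 / 8) : ℝ)) +
            ∫ u in Icc (-1) 1, (1 - u ^ 2) ^ (-(7 / 8) : ℝ)) := by
        refine mul_le_mul_of_nonneg_left (add_le_add_left ?_ _) (by positivity)
        simpa [show (-1 - 1 : ℝ) = -2 by norm_num, show (1 - -1 : ℝ) = 2 by norm_num] using
          setIntegral_abs_sub_rpow_le (r := -(7 / 8)) (by norm_num) hx
    _ = c * possioInnerBound * (1 - y ^ 2) ^ (-(1 / 4) : ℝ) := by rw [possioInnerBound]; ring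

lemma norm_integral_sq_le_of_le_possioMajorant {F : ℝ → E} {x y : ℝ} (hc : 0 ≤ c)
    (hx : x ∈ Icc (-1) 1) (hy : y ∈ Ioo (-1) 1)
    (hF : ∀ u ∈ Ioo (-1 : ℝ) 1, u ≠ x → ‖F u‖ ≤ c * possioMajorant x y u) :
    ‖∫ u in Icc (-1) 1, F u‖ ^ 2 ≤
      (c * possioInnerBound) ^ 2 * (1 - y ^ 2) ^ (-(1 / 2) : ℝ) := by
  have hp : 0 ≤ 1 - y ^ 2 := by nlinarith [hy.1, hy.2]
  calc ‖∫ u in Icc (-1) 1, F u‖ ^ 2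
      ≤ (c * possioInnerBound * (1 - y ^ 2) ^ (-(1 / 4) : ℝ)) ^ 2 :=
        pow_le_pow_left₀ (norm_nonneg _) (norm_integral_le_of_le_possioMajorant hc hx hy hF) 2
    _ = (c * possioInnerBound) ^ 2 * (1 - y ^ 2) ^ (-(1 / 2) : ℝ) := by
        rw [mul_pow, ← rpow_natCast ((1 - y ^ 2) ^ (-(1 / 4) : ℝ)) 2, ← rpow_mul hp]
        norm_num

lemma integral_integral_norm_integral_sq_le {F : ℝ → ℝ → ℝ → E} (hc : 0 ≤ c)
    (hF : PossioDominated c F) :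
    ∫ x in Icc (-1 : ℝ) 1, ∫ y in Icc (-1 : ℝ) 1, ‖∫ u in Icc (-1 : ℝ) 1, F x y u‖ ^ 2 ≤
      2 * ((c * possioInnerBound) ^ 2 *
        ∫ y in Icc (-1 : ℝ) 1, (1 - y ^ 2) ^ (-(1 / 2) : ℝ)) := by
  have hend := integrableOn_one_sub_sq_rpow_neg (γ := 1 / 2) (by norm_num) (by norm_num)
  have inner : ∀ x ∈ Icc (-1 : ℝ) 1,
      ∫ y in Icc (-1 : ℝ) 1, ‖∫ u in Icc (-1 : ℝ) 1, F x y u‖ ^ 2 ≤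
      (c * possioInnerBound) ^ 2 * ∫ y in Icc (-1 : ℝ) 1, (1 - y ^ 2) ^ (-(1 / 2) : ℝ) := by
    intro x hx
    rw [← integral_const_mul]
    refine integral_mono_of_nonneg (ae_of_all _ fun y => by positivity) (hend.const_mul _) ?_
    filter_upwards [ae_restrict_Icc_mem_Ioo (-1) 1] with y hy
    exact norm_integral_sq_le_of_le_possioMajorant hc hx hy (hF x hx y hy)
  calc ∫ x in Icc (-1 : ℝ) 1, ∫ y in Icc (-1 : ℝ) 1, ‖∫ u in Icc (-1 : ℝ) 1, F x y u‖ ^ 2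
      ≤ ∫ _ in Icc (-1 : ℝ) 1,
          (c * possioInnerBound) ^ 2 * ∫ y in Icc (-1 : ℝ) 1, (1 - y ^ 2) ^ (-(1 / 2) : ℝ) := by
        refine integral_mono_of_nonneg (ae_of_all _ fun x => by positivity)
          (integrable_const _) ?_
        filter_upwards [ae_restrict_mem measurableSet_Icc] with x hx
        exact inner x hx
    _ = _ := by rw [setIntegral_const, Real.volume_real_Icc]; norm_num

lemma integrableOn_norm_integral_sq {F : ℝ → ℝ → ℝ → E} (hc : 0 ≤ c)
    (hmeas : StronglyMeasurable fun q : (ℝ × ℝ) × ℝ => F q.1.1 q.1.2 q.2)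
    (hF : PossioDominated c F) :
    IntegrableOn (fun p : ℝ × ℝ => ‖∫ u in Icc (-1 : ℝ) 1, F p.1 p.2 u‖ ^ 2)
      (Icc (-1 : ℝ) 1 ×ˢ Icc (-1 : ℝ) 1) := by
  have hend := integrableOn_one_sub_sq_rpow_neg (γ := 1 / 2) (by norm_num) (by norm_num)
  rw [IntegrableOn, Measure.volume_eq_prod, ← Measure.prod_restrict]
  have hmeas' := (continuous_norm.pow 2).comp_stronglyMeasurable
    (hmeas.integral_prod_right' (ν := volume.restrict (Icc (-1 : ℝ) 1)))
  refine Integrable.mono' ((hend.const_mul ((c * possioInnerBound) ^ 2)).comp_snd _)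
    hmeas'.aestronglyMeasurable ?_
  filter_upwards [Measure.quasiMeasurePreserving_fst.ae (ae_restrict_mem measurableSet_Icc),
    Measure.quasiMeasurePreserving_snd.ae (ae_restrict_Icc_mem_Ioo (-1) 1)] with p hx hy
  rw [norm_pow, norm_norm]
  exact norm_integral_sq_le_of_le_possioMajorant hc hx hy (hF p.1 hx p.2 hy)

end Domination

lemma possioDominated_abs_log_div :
    PossioDominated 1 fun x y u =>
      |log (|x - u|)| / ((√(1 - y ^ 2) + √(1 - u ^ 2)) * √(1 - u ^ 2)) := by
  intro x _ y _ u _ _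
  rw [Real.norm_eq_abs, abs_of_nonneg (by positivity), one_mul, possioMajorant]
  exact div_le_div_of_nonneg_right (le_add_of_nonneg_right zero_le_one) (by positivity)

lemma possioDominated_mul_ofReal_div {K : ℝ → ℝ → ℂ}
    (hK : ∀ x u : ℝ, ‖K x u‖ ≤ |log (|x - u|)| + 1) :
    PossioDominated 2 fun x y u =>
      K x u * (((y + u) / ((√(1 - y ^ 2) + √(1 - u ^ 2)) * √(1 - u ^ 2)) : ℝ) : ℂ) := by
  intro x _ y hy u hu _
  have hyu : |y + u| ≤ 2 := abs_le.2 ⟨by linarith [hy.1, hu.1], by linarith [hy.2, hu.2]⟩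
  have hden : 0 ≤ (√(1 - y ^ 2) + √(1 - u ^ 2)) * √(1 - u ^ 2) := by positivity
  calc ‖K x u * (((y + u) / ((√(1 - y ^ 2) + √(1 - u ^ 2)) * √(1 - u ^ 2)) : ℝ) : ℂ)‖
      = ‖K x u‖ * (|y + u| / ((√(1 - y ^ 2) + √(1 - u ^ 2)) * √(1 - u ^ 2))) := by
        rw [norm_mul, Complex.norm_real, Real.norm_eq_abs, abs_div, abs_of_nonneg hden]
    _ ≤ (|log (|x - u|)| + 1) * (2 / ((√(1 - y ^ 2) + √(1 - u ^ 2)) * √(1 - u ^ 2))) :=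
        mul_le_mul (hK x u) (div_le_div_of_nonneg_right hyu hden) (by positivity)
          (by positivity)
    _ = 2 * possioMajorant x y u := by rw [possioMajorant]; ring

/-- The Hilbert–Schmidt estimate
`∫∫ (∫ |log|x−u|| / ((√(1−y²)+√(1−u²))√(1−u²)) du)² dy dx ≤ C` on `[−1,1]`,
and consequently the kernel
`N₂(x,y) = ∫ K̃(x,u)(y+u)/((√(1−y²)+√(1−u²))√(1−u²)) du` is square-integrable on
`[−1,1]²` whenever `|K̃(x,u)| ≤ |log|x−u|| + 1`. -/
theorem possio_kernel_hilbert_schmidt :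
    (∃ C : ℝ, 0 < C ∧
      (∫ x in Set.Icc (-1 : ℝ) 1, ∫ y in Set.Icc (-1 : ℝ) 1,
        (∫ u in Set.Icc (-1 : ℝ) 1,
          |Real.log (|x - u|)| /
            ((Real.sqrt (1 - y ^ 2) + Real.sqrt (1 - u ^ 2)) * Real.sqrt (1 - u ^ 2))) ^ 2)
        ≤ C) ∧
    ∀ K : ℝ → ℝ → ℂ, Measurable (fun p : ℝ × ℝ => K p.1 p.2) →
      (∀ x u : ℝ, ‖K x u‖ ≤ |Real.log (|x - u|)| + 1) →
      IntegrableOn (fun p : ℝ × ℝ =>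
          ‖∫ u in Set.Icc (-1 : ℝ) 1, K p.1 u *
            (((p.2 + u) /
              ((Real.sqrt (1 - p.2 ^ 2) + Real.sqrt (1 - u ^ 2)) * Real.sqrt (1 - u ^ 2)) : ℝ) : ℂ)‖ ^ 2)
        (Set.Icc (-1 : ℝ) 1 ×ˢ Set.Icc (-1 : ℝ) 1) := by
  refine ⟨⟨max (2 * (possioInnerBound ^ 2 *
      ∫ y in Icc (-1 : ℝ) 1, (1 - y ^ 2) ^ (-(1 / 2) : ℝ))) 1,
    lt_max_of_lt_right one_pos, le_trans ?_ (le_max_left _ _)⟩, fun K hK hKb => ?_⟩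
  · simpa only [Real.norm_eq_abs, sq_abs, one_mul] using
      integral_integral_norm_integral_sq_le zero_le_one possioDominated_abs_log_div
  · have hmeas : Measurable fun q : (ℝ × ℝ) × ℝ => K q.1.1 q.2 :=
      hK.comp (measurable_fst.fst.prodMk measurable_snd)
    exact integrableOn_norm_integral_sq zero_le_two (by fun_prop)
      (possioDominated_mul_ofReal_div hKb)
end

section
/- Let σ1 < σ2 be real numbers and Ψ(s) = (e^{iπ(s−σ1)/(σ2−σ1)} − i)/(e^{iπ(s−σ1)/(σ2−σ1)} + i). Then for every γ' ∈ (0, π/2) there exist constants c > 0 and δ0 ∈ (0, 1/2) such that for all δ ∈ (0, δ0), all ρ ∈ [γ', π − γ'], and all τ ∈ ℝ with e^{|τ|} ≤ c/δ, the point s = σ1 + (σ2−σ1)(ρ + iτ)/π satisfies σ1 < Re s < σ2 and |Ψ(s)| ≤ 1 − 2δ. -/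
/-! With `w = exp (iπ(s - σ1)/(σ2 - σ1)) = exp (-τ + iρ)` one has
`|w ∓ i|² = 2 e^{-τ} (cosh τ ∓ sin ρ)`, so `|Ψ s|² = (cosh τ - sin ρ)/(cosh τ + sin ρ)`.
On the substrip `sin ρ ≥ sin γ'`, while `cosh τ ≤ e^{|τ|} ≤ c/δ`; with `c = sin γ'/4` this gives
`sin ρ ≥ 4δ cosh τ`, hence `|Ψ s|² ≤ 1 - 4δ ≤ (1 - 2δ)²`. -/

open Complex

lemma Real.cosh_le_exp_abs (x : ℝ) : Real.cosh x ≤ Real.exp |x| := by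
  rw [← Real.cosh_abs, Real.cosh_eq]
  have : Real.exp (-|x|) ≤ Real.exp |x| := Real.exp_le_exp.2 (by linarith [abs_nonneg x])
  linarith

lemma Real.sin_le_sin_of_le_of_le_pi_sub {γ ρ : ℝ} (hγ : -(Real.pi / 2) ≤ γ) (hγρ : γ ≤ ρ)
    (hργ : ρ ≤ Real.pi - γ) : Real.sin γ ≤ Real.sin ρ := by
  rcases le_total ρ (Real.pi / 2) with hρ | hρ
  · exact Real.sin_le_sin_of_le_of_le_pi_div_two hγ hρ hγρ
  · rw [← Real.sin_pi_sub ρ]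
    exact Real.sin_le_sin_of_le_of_le_pi_div_two hγ (by linarith) (by linarith)

lemma Complex.normSq_exp_sub_I (z : ℂ) :
    normSq (exp z - I) = 2 * Real.exp z.re * (Real.cosh z.re - Real.sin z.im) := by
  rw [normSq_apply, Real.cosh_eq]
  simp only [sub_re, sub_im, exp_re, exp_im, I_re, I_im]
  have h : Real.exp z.re * Real.exp (-z.re) = 1 := by
    rw [← Real.exp_add, add_neg_cancel, Real.exp_zero]
  linear_combination Real.exp z.re ^ 2 * Real.sin_sq_add_cos_sq z.im - h

lemma Complex.normSq_exp_add_I (z : ℂ) :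
    normSq (exp z + I) = 2 * Real.exp z.re * (Real.cosh z.re + Real.sin z.im) := by
  rw [normSq_apply, Real.cosh_eq]
  simp only [add_re, add_im, exp_re, exp_im, I_re, I_im]
  have h : Real.exp z.re * Real.exp (-z.re) = 1 := by
    rw [← Real.exp_add, add_neg_cancel, Real.exp_zero]
  linear_combination Real.exp z.re ^ 2 * Real.sin_sq_add_cos_sq z.im - h

lemma Complex.norm_exp_sub_I_div_exp_add_I_sq (z : ℂ) :
    ‖(exp z - I) / (exp z + I)‖ ^ 2 =
      (Real.cosh z.re - Real.sin z.im) / (Real.cosh z.re + Real.sin z.im) := by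
  rw [← normSq_eq_norm_sq, normSq_div, normSq_exp_sub_I, normSq_exp_add_I,
    mul_div_mul_left _ _ (by positivity)]

lemma sub_div_add_le_one_sub_two_mul_sq {a b δ : ℝ} (ha : 0 < a) (hb : 0 ≤ b)
    (hδ : 4 * δ * a ≤ b) : (a - b) / (a + b) ≤ (1 - 2 * δ) ^ 2 := by
  rw [div_le_iff₀ (by positivity)]
  nlinarith [sq_nonneg δ]

lemma strip_coordinate_mul_I (σ1 σ2 : ℝ) (hσ : σ1 ≠ σ2) (w : ℂ) :
    I * Real.pi * ((σ1 + (σ2 - σ1) * w / Real.pi : ℂ) - σ1) / (σ2 - σ1) = I * w := by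
  have : (σ2 - σ1 : ℂ) ≠ 0 := sub_ne_zero.2 (by exact_mod_cast hσ.symm)
  field_simp
  ring

lemma re_strip_coordinate_mem_Ioo {σ1 σ2 ρ : ℝ} (hσ : σ1 < σ2) (hρ : ρ ∈ Set.Ioo 0 Real.pi)
    (τ : ℝ) : (σ1 + (σ2 - σ1) * (ρ + τ * I) / Real.pi : ℂ).re ∈ Set.Ioo σ1 σ2 := by
  have hre : (σ1 + (σ2 - σ1) * (ρ + τ * I) / Real.pi : ℂ).re =
      σ1 + (σ2 - σ1) * (ρ / Real.pi) := by
    simp [mul_div_assoc]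
  have hρπ : ρ / Real.pi ∈ Set.Ioo 0 1 :=
    ⟨div_pos hρ.1 Real.pi_pos, (div_lt_one Real.pi_pos).2 hρ.2⟩
  rw [hre]
  constructor <;> nlinarith [hρπ.1, hρπ.2]

/-- For the strip-to-disk map
`Ψ(s) = (e^{iπ(s−σ1)/(σ2−σ1)} − i)/(e^{iπ(s−σ1)/(σ2−σ1)} + i)` and every
`γ' ∈ (0, π/2)` there are `c > 0` and `δ0 ∈ (0, 1/2)` such that for all
`δ ∈ (0, δ0)`, `ρ ∈ [γ', π − γ']` and `τ` with `e^{|τ|} ≤ c/δ`, the point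
`s = σ1 + (σ2−σ1)(ρ + iτ)/π` lies in the strip and `|Ψ(s)| ≤ 1 − 2δ`. -/
theorem substrip_in_disk_preimage
    (σ1 σ2 : ℝ) (h : σ1 < σ2)
    (Ψ : ℂ → ℂ)
    (hΨ : ∀ s : ℂ, Ψ s =
      (Complex.exp (Complex.I * (Real.pi : ℂ) * (s - (σ1 : ℂ)) / ((σ2 : ℂ) - (σ1 : ℂ))) - Complex.I) /
      (Complex.exp (Complex.I * (Real.pi : ℂ) * (s - (σ1 : ℂ)) / ((σ2 : ℂ) - (σ1 : ℂ))) + Complex.I)) :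
    ∀ γ' : ℝ, 0 < γ' → γ' < Real.pi / 2 →
      ∃ c : ℝ, 0 < c ∧ ∃ δ0 : ℝ, 0 < δ0 ∧ δ0 < 1 / 2 ∧
        ∀ δ : ℝ, 0 < δ → δ < δ0 →
        ∀ ρ : ℝ, γ' ≤ ρ → ρ ≤ Real.pi - γ' →
        ∀ τ : ℝ, Real.exp |τ| ≤ c / δ →
        ∀ s : ℂ, s = (σ1 : ℂ) + ((σ2 : ℂ) - (σ1 : ℂ)) * ((ρ : ℂ) + (τ : ℂ) * Complex.I) / (Real.pi : ℂ) →
          (σ1 < s.re ∧ s.re < σ2) ∧ ‖Ψ s‖ ≤ 1 - 2 * δ := by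
  intro γ' hγ' hγ'π
  have hsinγ' : 0 < Real.sin γ' := Real.sin_pos_of_pos_of_lt_pi hγ' (by linarith)
  refine ⟨Real.sin γ' / 4, by positivity, 1 / 4, by norm_num, by norm_num, ?_⟩
  intro δ hδ _ ρ hγρ hργ τ hτ s rfl
  refine ⟨re_strip_coordinate_mem_Ioo h ⟨by linarith, by linarith⟩ τ, ?_⟩
  have hsin : Real.sin γ' ≤ Real.sin ρ := Real.sin_le_sin_of_le_of_le_pi_sub (by linarith) hγρ hργ
  have hcosh : 4 * δ * Real.cosh τ ≤ Real.sin ρ := by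
    have := (Real.cosh_le_exp_abs τ).trans hτ
    rw [le_div_iff₀ hδ] at this
    linarith
  rw [hΨ, strip_coordinate_mul_I σ1 σ2 h.ne, ← pow_le_pow_iff_left₀ (norm_nonneg _)
    (by linarith) two_ne_zero, norm_exp_sub_I_div_exp_add_I_sq]
  simpa using sub_div_add_le_one_sub_two_mul_sq (Real.cosh_pos τ) (hsinγ'.le.trans hsin) hcosh
end
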